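/- With the group action of {±1} × 𝕊 on 𝕊^N given by (ε, z)·Ω = z·Ω^ε (where Ω^{−1} denotes entrywise complex conjugation and z·Ω is entrywise multiplication by z), two elements Ω, Ω' of the set H = {Ω : Ω(0) = 1, Im(Ω(1)) > 0} lie in the same orbit if and only if Ω = Ω'. That is, H intersects each orbit in at most one point. -/
import Mathlib


theorem representative_set_smallest {N : ℕ} (hN : 2 ≤ N) (Ω Ω' : Fin N → Circle)
    (hΩ : (Ω ⟨0, by omega⟩ : ℂ) = 1 ∧ 0 < (Ω ⟨1, by omega⟩ : ℂ).im)
    (hΩ' : (Ω' ⟨0, by omega⟩ : ℂ) = 1 ∧ 0 < (Ω' ⟨1, by omega⟩ : ℂ).im) :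
    (∃ (ε : Bool) (z : Circle),
        Ω' = fun j => z * (if ε then (Ω j)⁻¹ else Ω j)) ↔ Ω = Ω' := by
  constructor
  · rintro ⟨ε, z, rfl⟩
    have h0 := hΩ'.1
    have h1 := hΩ'.2
    simp only [Circle.coe_mul] at h0 h1
    have hz : (z : ℂ) = 1 := by
      cases ε with
      | false => simpa [hΩ.1] using h0
      | true =>
        rw [if_pos rfl, Circle.coe_inv_eq_conj, hΩ.1] at h0
        simpa using h0
    cases ε with
    | false =>
      funext j
      exact (Subtype.ext (by simp [hz] : ((z * Ω j : Circle) : ℂ) = (Ω j : ℂ))).symm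
    | true =>
      exfalso
      rw [if_pos rfl, hz, one_mul, Circle.coe_inv_eq_conj] at h1
      simp only [Complex.conj_im] at h1
      linarith [hΩ.2]
  · rintro rfl
    exact ⟨false, 1, by funext j; simp⟩
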